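/- Combining the surrogate optimization guarantee with Pinsker: if Θ is a parameter set, π_θ and π̂_θ are families of probability mass functions on a finite set, r is a reward with 0 ≤ r ≤ M, and sup_{θ∈Θ} KL(π̂_θ ‖ π_θ) ≤ ε², then the θ* maximizing E_{π̂_θ}[r] satisfies E_{π_{θ*}}[r] ≥ sup_{θ∈Θ} E_{π̂_θ}[r] − √2·M·ε. -/

import Mathlib

/-!
Pinsker's inequality `(∑ |p - q|)² ≤ 2 KL(p ‖ q)` follows from the pointwise bound
`3 (t - 1)² ≤ 2 (t + 2) (t log t + 1 - t)` (applied at `t = p / q` and multiplied by `q²`) and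
Cauchy–Schwarz with the weights `(p + 2q) / 3`, which sum to `1`. The pointwise bound holds
because the difference of its two sides is convex on `[0, ∞)` with a critical point at `t = 1`.

For a reward with values in `[0, M]`, the expected rewards under `π̂ θ⋆` and `π θ⋆` therefore
differ by at most `M · √2 ε`, and `θ⋆` maximizes the surrogate value.
-/

section

open Real Set Finset InformationTheory

noncomputable def pinskerGap (t : ℝ) : ℝ := 2 * (t + 2) * klFun t - 3 * (t - 1) ^ 2

lemma hasDerivAt_pinskerGap {t : ℝ} (ht : t ≠ 0) :
    HasDerivAt pinskerGap (4 * ((t + 1) * log t - 2 * (t - 1))) t := by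
  have h := ((((hasDerivAt_id t).add_const 2).const_mul 2).mul (hasDerivAt_klFun ht)).sub
    ((((hasDerivAt_id t).sub_const 1).pow 2).const_mul 3)
  refine h.congr_deriv ?_
  simp only [klFun_apply, id]
  ring

lemma hasDerivAt_deriv_pinskerGap {t : ℝ} (ht : t ≠ 0) :
    HasDerivAt (fun t ↦ 4 * ((t + 1) * log t - 2 * (t - 1))) (4 * (log t + t⁻¹ - 1)) t := by
  have h := ((((hasDerivAt_id t).add_const 1).mul (hasDerivAt_log ht)).sub
    (((hasDerivAt_id t).sub_const 1).const_mul 2)).const_mul 4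
  refine h.congr_deriv ?_
  simp only [id]
  field_simp
  ring

lemma convexOn_pinskerGap : ConvexOn ℝ (Ici 0) pinskerGap := by
  refine convexOn_of_hasDerivWithinAt2_nonneg
    (f' := fun t ↦ 4 * ((t + 1) * log t - 2 * (t - 1))) (f'' := fun t ↦ 4 * (log t + t⁻¹ - 1))
    (convex_Ici 0)
    (by unfold pinskerGap; fun_prop (disch := exact continuous_klFun.continuousOn)) ?_ ?_ ?_ <;>
    simp only [interior_Ici, Set.mem_Ioi]
  · exact fun t ht ↦ (hasDerivAt_pinskerGap ht.ne').hasDerivWithinAt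
  · exact fun t ht ↦ (hasDerivAt_deriv_pinskerGap ht.ne').hasDerivWithinAt
  · intro t ht
    linarith [one_sub_inv_le_log_of_pos ht]

lemma pinskerGap_nonneg {t : ℝ} (ht : 0 ≤ t) : 0 ≤ pinskerGap t := by
  have hmin : IsMinOn pinskerGap (Ici 0) 1 := by
    refine convexOn_pinskerGap.isMinOn_of_rightDeriv_eq_zero (by simp) ?_
    rw [((hasDerivAt_pinskerGap one_ne_zero).hasDerivWithinAt).derivWithin
      (uniqueDiffWithinAt_Ioi 1)]
    simp
  simpa [pinskerGap, klFun_one] using hmin ht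

lemma mul_log_div_add_sub_eq_mul_klFun (p : ℝ) {q : ℝ} (hq : q ≠ 0) :
    p * log (p / q) + q - p = q * klFun (p / q) := by
  rw [klFun_apply]
  field_simp

lemma mul_log_div_add_sub_nonneg {p q : ℝ} (hp : 0 ≤ p) (hq : 0 ≤ q)
    (hpq : q = 0 → p = 0) :
    0 ≤ p * log (p / q) + q - p := by
  rcases hq.eq_or_lt with rfl | hq
  · simp [hpq rfl]
  rw [mul_log_div_add_sub_eq_mul_klFun p hq.ne']
  exact mul_nonneg hq.le (klFun_nonneg (div_nonneg hp hq.le))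

lemma three_mul_sq_sub_le_mul_log_div_add_sub {p q : ℝ} (hp : 0 ≤ p) (hq : 0 ≤ q)
    (hpq : q = 0 → p = 0) :
    3 * (p - q) ^ 2 ≤ 2 * (p + 2 * q) * (p * log (p / q) + q - p) := by
  rcases hq.eq_or_lt with rfl | hq
  · simp [hpq rfl]
  have hgap := mul_nonneg (sq_nonneg q) (pinskerGap_nonneg (div_nonneg hp hq.le))
  rw [mul_log_div_add_sub_eq_mul_klFun p hq.ne']
  unfold pinskerGap at hgap
  field_simp at hgap
  linarith

theorem sq_sum_abs_sub_le_two_mul_sum_mul_log {X : Type*} [Fintype X] {p q : X → ℝ}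
    (hp : ∀ x, 0 ≤ p x) (hq : ∀ x, 0 ≤ q x) (hp1 : ∑ x, p x = 1) (hq1 : ∑ x, q x = 1)
    (hpq : ∀ x, q x = 0 → p x = 0) :
    (∑ x, |p x - q x|) ^ 2 ≤ 2 * ∑ x, p x * log (p x / q x) := by
  have hcs := sum_sq_le_sum_mul_sum_of_sq_le_mul univ (r := fun x ↦ |p x - q x|)
    (f := fun x ↦ 2 * (p x * log (p x / q x) + q x - p x)) (g := fun x ↦ (p x + 2 * q x) / 3)
    (fun x _ ↦ by linarith [mul_log_div_add_sub_nonneg (hp x) (hq x) (hpq x)])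
    (fun x _ ↦ by linarith [hp x, hq x])
    (fun x _ ↦ by
      rw [sq_abs]
      linarith [three_mul_sq_sub_le_mul_log_div_add_sub (hp x) (hq x) (hpq x)])
  have hf : ∑ x, 2 * (p x * log (p x / q x) + q x - p x) =
      2 * ∑ x, p x * log (p x / q x) := by
    simp only [← mul_sum, sum_sub_distrib, sum_add_distrib, hp1, hq1]
    ring
  have hg : ∑ x, (p x + 2 * q x) / 3 = 1 := by
    simp only [← sum_div, sum_add_distrib, ← mul_sum, hp1, hq1]
    norm_num
  rwa [hf, hg, mul_one] at hcs

theorem sum_abs_sub_le_sqrt_two_mul {X : Type*} [Fintype X] {p q : X → ℝ} {ε : ℝ}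
    (hp : ∀ x, 0 ≤ p x) (hq : ∀ x, 0 ≤ q x) (hp1 : ∑ x, p x = 1) (hq1 : ∑ x, q x = 1)
    (hpq : ∀ x, q x = 0 → p x = 0) (hε : 0 ≤ ε) (hKL : ∑ x, p x * log (p x / q x) ≤ ε ^ 2) :
    ∑ x, |p x - q x| ≤ √2 * ε := by
  refine le_of_sq_le_sq ?_ (by positivity)
  calc (∑ x, |p x - q x|) ^ 2 ≤ 2 * ∑ x, p x * log (p x / q x) :=
        sq_sum_abs_sub_le_two_mul_sum_mul_log hp hq hp1 hq1 hpq
    _ ≤ (√2 * ε) ^ 2 := by rw [mul_pow, sq_sqrt zero_le_two]; gcongr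

lemma sum_mul_sub_sum_mul_le_mul_sum_abs {ι : Type*} (s : Finset ι) (p q r : ι → ℝ) {M : ℝ}
    (hr : ∀ i ∈ s, |r i| ≤ M) :
    ∑ i ∈ s, p i * r i - ∑ i ∈ s, q i * r i ≤ M * ∑ i ∈ s, |p i - q i| := by
  rw [← sum_sub_distrib, mul_sum]
  refine sum_le_sum fun i hi ↦ ?_
  calc p i * r i - q i * r i = (p i - q i) * r i := by ring
    _ ≤ |p i - q i| * |r i| := abs_mul (p i - q i) (r i) ▸ le_abs_self _
    _ ≤ M * |p i - q i| := by
      rw [mul_comm]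
      exact mul_le_mul_of_nonneg_right (hr i hi) (abs_nonneg _)

end

/-- Optimizing the tractable surrogate policies `π̂ θ` yields a near-optimal true
policy `π θ⋆`: its expected reward is within `√2·M·ε` of the surrogate value of any
`θ ∈ Θ`, in particular of `sup_θ E_{π̂_θ}[r]`. -/
theorem surrogate_optimization_guarantee
    {X Θ : Type*} [Fintype X] (π πhat : Θ → X → ℝ) (r : X → ℝ) (M ε : ℝ)
    (hπ0 : ∀ θ x, 0 ≤ π θ x) (hπ1 : ∀ θ, ∑ x, π θ x = 1)
    (hπhat0 : ∀ θ x, 0 ≤ πhat θ x) (hπhat1 : ∀ θ, ∑ x, πhat θ x = 1)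
    (hac : ∀ θ x, π θ x = 0 → πhat θ x = 0)
    (hr : ∀ x, 0 ≤ r x ∧ r x ≤ M)
    (hε : 0 ≤ ε)
    (hKL : ∀ θ, ∑ x, πhat θ x * Real.log (πhat θ x / π θ x) ≤ ε ^ 2)
    (θstar : Θ)
    (hmax : ∀ θ, ∑ x, πhat θ x * r x ≤ ∑ x, πhat θstar x * r x) :
    ∀ θ, ∑ x, π θstar x * r x ≥ ∑ x, πhat θ x * r x - Real.sqrt 2 * M * ε := by
  intro θ
  obtain ⟨x₀, -⟩ := Finset.nonempty_of_sum_ne_zero (s := Finset.univ) (f := π θstar)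
    (by simp [hπ1])
  have hM : 0 ≤ M := (hr x₀).1.trans (hr x₀).2
  have htv := sum_abs_sub_le_sqrt_two_mul (hπhat0 θstar) (hπ0 θstar) (hπhat1 θstar) (hπ1 θstar)
    (hac θstar) hε (hKL θstar)
  have hgap := sum_mul_sub_sum_mul_le_mul_sum_abs Finset.univ (πhat θstar) (π θstar) r
    fun x _ ↦ abs_le.mpr ⟨by linarith [hr x], (hr x).2⟩
  linarith [mul_le_mul_of_nonneg_left htv hM, hmax θ]
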